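/- arXiv:2310.04012 — 4 statements merged into one kernel-verified Lean document; each statement's English description precedes it below -/
import Mathlib

section
/- Two permutations σ₁ and σ₂ in the symmetric group Σₙ are conjugate if and only if their permutation matrices c_{σ₁} and c_{σ₂} (the n×n matrices with 1 in entry (i, σ(i)) and 0 elsewhere) are similar in M_n(ℂ). -/
/-! Conjugate permutations give similar permutation matrices, since `σ ↦ (σ⁻¹).permMatrix` is a
monoid homomorphism. Conversely, similar matrices have equal traces of all powers, and the trace
of `(σ ^ k).permMatrix` counts the fixed points of `σ ^ k`, namely the fixed points of `σ` together
with the points on the cycles of `σ` whose length divides `k`. Knowing, for every `k`, the total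
length of the cycles whose length divides `k` recovers the cycle type by strong induction on the
length, and permutations with the same cycle type are conjugate. -/

open Equiv Finset Function Matrix

theorem IsConj.inv {G : Type*} [Group G] {a b : G} (h : IsConj a b) : IsConj a⁻¹ b⁻¹ := by
  obtain ⟨c, rfl⟩ := isConj_iff.1 h
  exact isConj_iff.2 ⟨c, conj_inv.symm⟩

namespace Multiset

theorem sum_filter_dvd_eq_sum_divisors {m : ℕ} (hm : m ≠ 0) (M : Multiset ℕ) :
    (M.filter (· ∣ m)).sum = ∑ d ∈ m.divisors, M.count d * d := by
  rw [Finset.sum_multiset_count_of_subset _ m.divisors fun d hd => by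
    simp only [mem_toFinset, mem_filter] at hd
    exact Nat.mem_divisors.2 ⟨hd.2, hm⟩]
  exact Finset.sum_congr rfl fun d hd => by
    rw [count_filter_of_pos (p := (· ∣ m)) (Nat.dvd_of_mem_divisors hd), smul_eq_mul]

theorem eq_of_sum_filter_dvd_eq {M₁ M₂ : Multiset ℕ} (h₁ : 0 ∉ M₁) (h₂ : 0 ∉ M₂)
    (h : ∀ k ≠ 0, (M₁.filter (· ∣ k)).sum = (M₂.filter (· ∣ k)).sum) : M₁ = M₂ := by
  ext m
  induction m using Nat.strong_induction_on with
  | _ m ih =>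
    rcases eq_or_ne m 0 with rfl | hm
    · rw [count_eq_zero.2 h₁, count_eq_zero.2 h₂]
    have hproper : ∑ d ∈ m.properDivisors, M₁.count d * d
        = ∑ d ∈ m.properDivisors, M₂.count d * d :=
      Finset.sum_congr rfl fun d hd => by rw [ih d (Nat.mem_properDivisors.1 hd).2]
    have hm' := h m hm
    rw [sum_filter_dvd_eq_sum_divisors hm, sum_filter_dvd_eq_sum_divisors hm,
      ← Nat.cons_self_properDivisors hm, Finset.sum_cons, Finset.sum_cons, hproper] at hm'
    exact Nat.eq_of_mul_eq_mul_right (Nat.pos_of_ne_zero hm) (Nat.add_right_cancel hm')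

end Multiset

namespace Equiv.Perm

variable {α : Type*} [Fintype α] [DecidableEq α]

theorem card_support_pow (σ : Perm α) (k : ℕ) :
    #(σ ^ k).support = (σ.cycleType.filter (¬ · ∣ k)).sum := by
  induction σ using cycle_induction_on with
  | base_one => simp
  | base_cycles σ hσ =>
    rw [hσ.cycleType]
    by_cases hk : #σ.support ∣ k
    · have hpow : σ ^ k = 1 := by rwa [← orderOf_dvd_iff_pow_eq_one, hσ.orderOf]
      rw [hpow, Multiset.filter_singleton, if_neg (not_not_intro hk)]
      simp
    · rw [hσ.support_pow_eq_iff.2 (by rwa [hσ.orderOf]), Multiset.filter_singleton, if_pos hk,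
        Multiset.sum_singleton]
  | induction_disjoint σ τ hd _ hσ hτ =>
    rw [hd.commute.mul_pow, (hd.pow_disjoint_pow k k).card_support_mul, hd.cycleType_mul,
      Multiset.filter_add, Multiset.sum_add, hσ, hτ]

theorem ncard_fixedPoints_pow (σ : Perm α) (k : ℕ) :
    (fixedPoints (σ ^ k)).ncard = (fixedPoints σ).ncard + (σ.cycleType.filter (· ∣ k)).sum := by
  simp only [← Nat.card_coe_set_eq, Nat.card_eq_fintype_card, card_fixedPoints, sum_cycleType,
    card_support_pow]
  have hsplit := Multiset.sum_filter_add_sum_filter_not (s := σ.cycleType) (· ∣ k)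
  have hle := σ.support.card_le_univ
  rw [sum_cycleType] at hsplit
  omega

theorem isConj_of_ncard_fixedPoints_pow_eq {σ τ : Perm α}
    (h : ∀ k : ℕ, (fixedPoints (σ ^ k)).ncard = (fixedPoints (τ ^ k)).ncard) : IsConj σ τ := by
  refine isConj_iff_cycleType_eq.2 <| Multiset.eq_of_sum_filter_dvd_eq
    (fun h0 => by simpa using two_le_of_mem_cycleType h0)
    (fun h0 => by simpa using two_le_of_mem_cycleType h0) fun k _ => ?_
  have hfix : (fixedPoints σ).ncard = (fixedPoints τ).ncard := by simpa using h 1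
  have hk := h k
  rw [ncard_fixedPoints_pow, ncard_fixedPoints_pow, hfix] at hk
  exact Nat.add_left_cancel hk

variable {R : Type*}

theorem permMatrix_pow [Semiring R] (σ : Perm α) (k : ℕ) :
    (σ ^ k).permMatrix R = σ.permMatrix R ^ k := by
  simpa [inv_pow] using map_pow (permMatrixHom (n := α) (R := R)) σ⁻¹ k

theorem _root_.IsConj.permMatrix [Semiring R] {σ τ : Perm α} (h : IsConj σ τ) :
    IsConj (σ.permMatrix R) (τ.permMatrix R) := by
  simpa using (permMatrixHom (n := α) (R := R)).map_isConj h.inv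

end Equiv.Perm

theorem Matrix.trace_eq_of_isConj {n R : Type*} [Fintype n] [DecidableEq n] [CommSemiring R]
    {A B : Matrix n n R} (h : IsConj A B) : A.trace = B.trace := by
  obtain ⟨c, hc⟩ := h
  rw [← trace_units_conj c A, hc.eq, mul_assoc, Units.mul_inv, mul_one]

/-- Two permutations `σ₁ σ₂ ∈ Σₙ` are conjugate if and only if their
permutation matrices (the `n × n` matrices with `1` in entry `(i, σ i)` and `0` elsewhere)
are similar (i.e. conjugate) in `Mₙ(ℂ)`. -/
theorem perm_isConj_iff_permMatrix_isConj (n : ℕ) (σ₁ σ₂ : Equiv.Perm (Fin n)) :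
    IsConj σ₁ σ₂ ↔ IsConj (σ₁.permMatrix ℂ) (σ₂.permMatrix ℂ) := by
  refine ⟨IsConj.permMatrix, fun h => Perm.isConj_of_ncard_fixedPoints_pow_eq fun k => ?_⟩
  have htrace := trace_eq_of_isConj (h.pow k)
  rwa [← Perm.permMatrix_pow, ← Perm.permMatrix_pow, trace_permutation, trace_permutation,
    Nat.cast_inj] at htrace
end

section
/- If the products ∏ᵢ(x^{λᵢ} − 1) and ∏ⱼ(x^{μⱼ} − 1) in ℂ[x] are equal, where λ = (λ₁ ≥ ⋯ ≥ λ_u) and μ = (μ₁ ≥ ⋯ ≥ μ_v) are partitions of n, then u = v and λᵢ = μᵢ for all i. -/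
open Polynomial

lemma sup_mem_of_ne_zero {s : Multiset ℕ} (h : s ≠ 0) : s.sup ∈ s := by
  induction s using Multiset.induction with
  | empty => simp at h
  | cons a s ih =>
    rcases eq_or_ne s 0 with rfl | hs
    · simp
    · rcases le_total a s.sup with h1 | h1
      · rw [Multiset.sup_cons, sup_eq_right.mpr h1]
        exact Multiset.mem_cons_of_mem (ih hs)
      · rw [Multiset.sup_cons, sup_eq_left.mpr h1]
        exact Multiset.mem_cons_self a s

lemma mem_of_prod_eq {M : ℕ} (hM : 0 < M) (s t : Multiset ℕ)
    (hMs : M ∈ s) (ht : ∀ d ∈ t, 0 < d) (htle : ∀ d ∈ t, d ≤ M)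
    (h : (s.map fun d => (X : ℂ[X]) ^ d - 1).prod =
         (t.map fun d => (X : ℂ[X]) ^ d - 1).prod) :
    M ∈ t := by
  set ζ := Complex.exp (2 * Real.pi * Complex.I / M) with hζ
  have hprim : IsPrimitiveRoot ζ M := Complex.isPrimitiveRoot_exp M hM.ne'
  have h0 : eval ζ ((s.map fun d => (X : ℂ[X]) ^ d - 1).prod) = 0 := by
    rw [eval_multiset_prod]
    apply Multiset.prod_eq_zero
    refine Multiset.mem_map.mpr ⟨(X : ℂ[X]) ^ M - 1, Multiset.mem_map_of_mem _ hMs, ?_⟩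
    simp [hprim.pow_eq_one]
  rw [h, eval_multiset_prod] at h0
  have hmem := Multiset.prod_eq_zero_iff.mp h0
  obtain ⟨q, hq, hq0⟩ := Multiset.mem_map.mp hmem
  obtain ⟨d, hd, rfl⟩ := Multiset.mem_map.mp hq
  have hpow : ζ ^ d = 1 := by
    have := hq0
    simp only [eval_sub, eval_pow, eval_X, eval_one, sub_eq_zero] at this
    exact this
  have hdvd : M ∣ d := hprim.dvd_of_pow_eq_one d hpow
  have : d = M := le_antisymm (htle d hd) (Nat.le_of_dvd (ht d hd) hdvd)
  exact this ▸ hd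

lemma multiset_eq_of_prod_eq (s : Multiset ℕ) : ∀ (t : Multiset ℕ),
    (∀ d ∈ s, 0 < d) → (∀ d ∈ t, 0 < d) →
    (s.map fun d => (X : ℂ[X]) ^ d - 1).prod =
      (t.map fun d => (X : ℂ[X]) ^ d - 1).prod → s = t := by
  induction s using Multiset.strongInductionOn with
  | ih s IH =>
    intro t hs ht h
    rcases eq_or_ne (s + t) 0 with h0 | h0
    · rw [add_eq_zero] at h0
      rw [h0.1, h0.2]
    · obtain ⟨M, hMmem, hmax⟩ : ∃ M, M ∈ s + t ∧ ∀ d ∈ s + t, d ≤ M :=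
        ⟨(s + t).sup, sup_mem_of_ne_zero h0, fun d hd => Multiset.le_sup hd⟩
      have hMpos : 0 < M := by
        rcases Multiset.mem_add.mp hMmem with hm | hm
        · exact hs M hm
        · exact ht M hm
      have hsle : ∀ d ∈ s, d ≤ M := fun d hd =>
        hmax d (Multiset.mem_add.mpr (Or.inl hd))
      have htle : ∀ d ∈ t, d ≤ M := fun d hd =>
        hmax d (Multiset.mem_add.mpr (Or.inr hd))
      have hMst : M ∈ s ∧ M ∈ t := by
        rcases Multiset.mem_add.mp hMmem with hm | hm
        · exact ⟨hm, mem_of_prod_eq hMpos s t hm ht htle h⟩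
        · exact ⟨mem_of_prod_eq hMpos t s hm hs hsle h.symm, hm⟩
      obtain ⟨s', rfl⟩ := Multiset.exists_cons_of_mem hMst.1
      obtain ⟨t', rfl⟩ := Multiset.exists_cons_of_mem hMst.2
      have hne : ((X : ℂ[X]) ^ M - 1) ≠ 0 := by
        have := X_pow_sub_C_ne_zero hMpos (1 : ℂ)
        simpa using this
      rw [Multiset.map_cons, Multiset.map_cons, Multiset.prod_cons, Multiset.prod_cons] at h
      have h' := mul_left_cancel₀ hne h
      have hst : s' = t' := IH s' (Multiset.lt_cons_self s' M) t'
        (fun d hd => hs d (Multiset.mem_cons_of_mem hd))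
        (fun d hd => ht d (Multiset.mem_cons_of_mem hd)) h'
      rw [hst]

/-- If the products `∏ᵢ (x^{λᵢ} − 1)` and `∏ⱼ (x^{μⱼ} − 1)` in `ℂ[x]`
coincide, where `λ` and `μ` are partitions of `n`, then the partitions are equal
(same number of parts and the same parts). -/
theorem partition_eq_of_prod_eq (n : ℕ) (lam mu : n.Partition)
    (h : (lam.parts.map fun d => (X : ℂ[X]) ^ d - 1).prod =
         (mu.parts.map fun d => (X : ℂ[X]) ^ d - 1).prod) :
    lam = mu := by
  have := multiset_eq_of_prod_eq lam.parts mu.parts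
    (fun d hd => lam.parts_pos hd) (fun d hd => mu.parts_pos hd) h
  cases lam; cases mu; simpa using this
end

section
/- Let Λ be a finite-dimensional algebra over a field k and let E/k be a field extension. Then Λ is self-injective (i.e., Λ is injective as a left module over itself) if and only if the E-algebra Λ ⊗_k E is self-injective. -/
/-!
Over a field `F`, the coinduced module `Hom_F(A, A)` (with `(a • f) x = f (x * a)`) is an
injective `A`-module, and `a ↦ (x ↦ x * a)` embeds `A` into it. Hence `A` is self-injective iff
some `A`-linear `r : Hom_F(A, A) → A` sends the identity to `1`. Such an `r` for `Λ` base-changes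
to one for `E ⊗ Λ`, because `Hom_E(E ⊗ Λ, E ⊗ Λ) = E ⊗ Hom_k(Λ, Λ)` when `Λ` is
finite-dimensional. Conversely an `r` for `E ⊗ Λ` descends to `Λ`: precompose with `f ↦ E ⊗ f`
and compose with `φ ⊗ Λ` for a `k`-linear retraction `φ : E → k`.
-/

open TensorProduct

universe u v

theorem Module.Injective.of_split {R : Type*} {M N : Type v} [Ring R] [AddCommGroup M]
    [AddCommGroup N] [Module R M] [Module R N] [Module.Injective R M]
    (i : N →ₗ[R] M) (r : M →ₗ[R] N) (H : r ∘ₗ i = LinearMap.id) : Module.Injective R N where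
  out _ _ _ _ _ _ f hf g := by
    obtain ⟨h, hh⟩ := Module.Injective.out f hf (i ∘ₗ g)
    exact ⟨r ∘ₗ h, fun x => by simp [hh, ← LinearMap.comp_apply r i, H]⟩

theorem Module.injective_self_iff_of_ringEquiv {R : Type u} {S : Type v} [Ring R] [Ring S]
    (e : R ≃+* S) : Module.Injective R R ↔ Module.Injective S S :=
  ⟨fun _ => .of_ringEquiv e e.toSemilinearEquiv,
    fun _ => .of_ringEquiv e.symm e.symm.toSemilinearEquiv⟩

def Coind (F A V : Type*) [CommRing F] [Ring A] [Algebra F A] [AddCommGroup V] [Module F V] :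
    Type _ :=
  A →ₗ[F] V

namespace Coind

variable {F A V : Type*} [CommRing F] [Ring A] [Algebra F A] [AddCommGroup V] [Module F V]

instance : AddCommGroup (Coind F A V) := inferInstanceAs (AddCommGroup (A →ₗ[F] V))

instance : FunLike (Coind F A V) A V := inferInstanceAs (FunLike (A →ₗ[F] V) A V)

instance : LinearMapClass (Coind F A V) F A V :=
  inferInstanceAs (LinearMapClass (A →ₗ[F] V) F A V)

instance : Module F (Coind F A V) := inferInstanceAs (Module F (A →ₗ[F] V))

def of : (A →ₗ[F] V) ≃ₗ[F] Coind F A V := LinearEquiv.refl F _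

@[simp] lemma of_apply (f : A →ₗ[F] V) (x : A) : of f x = f x := rfl

@[simp] lemma of_symm_apply (f : Coind F A V) (x : A) : of.symm f x = f x := rfl

@[simp] lemma add_apply (f g : Coind F A V) (x : A) : (f + g) x = f x + g x := rfl

@[ext] lemma ext {f g : Coind F A V} (h : ∀ x, f x = g x) : f = g := DFunLike.ext _ _ h

instance : Module A (Coind F A V) where
  smul a f := of (of.symm f ∘ₗ LinearMap.mulRight F a)
  one_smul f := by ext x; exact congrArg f (mul_one x)
  mul_smul a b f := by ext x; exact congrArg f (mul_assoc x a b).symm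
  smul_zero _ := rfl
  smul_add _ _ _ := rfl
  add_smul a b f := by ext x; exact (congrArg f (mul_add x a b)).trans (map_add f _ _)
  zero_smul f := by ext x; exact (congrArg f (mul_zero x)).trans (map_zero f)

@[simp] lemma smul_apply (a : A) (f : Coind F A V) (x : A) : (a • f) x = f (x * a) := rfl

instance : IsScalarTower F A (Coind F A V) where
  smul_assoc c a f := by
    ext x
    simp only [smul_apply, mul_smul_comm]
    exact map_smul f c (x * a)

instance : SMulCommClass A F (Coind F A V) where
  smul_comm _ _ _ := rfl

theorem injective {F A V : Type u} [CommRing F] [Ring A] [Algebra F A] [AddCommGroup V]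
    [Module F V] [Module.Injective F V] : Module.Injective A (Coind F A V) := by
  refine Module.Baer.injective fun I g => ?_
  let g₀ : I →ₗ[F] V :=
    { toFun i := g i 1
      map_add' i j := by simp
      map_smul' c i := by
        rw [← algebraMap_smul A c i, map_smul, smul_apply, one_mul, Algebra.algebraMap_eq_smul_one,
          map_smul, RingHom.id_apply] }
  obtain ⟨h₀, hh₀⟩ := Module.Injective.extension_property F V I A
    (I.subtype.restrictScalars F) Subtype.val_injective g₀
  refine ⟨LinearMap.toSpanSingleton A _ (of h₀), fun x hx => ?_⟩
  ext y
  calc h₀ (y * x) = g (y • ⟨x, hx⟩) 1 := LinearMap.congr_fun hh₀ (y • ⟨x, hx⟩)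
    _ = g ⟨x, hx⟩ y := by rw [map_smul, smul_apply, one_mul]

end Coind

/-- `A` is a retract of `Coind F A A` along the embedding `a ↦ a • id = (x ↦ x * a)`. -/
def CoindSplits (F A : Type*) [CommRing F] [Ring A] [Algebra F A] : Prop :=
  ∃ r : Coind F A A →ₗ[A] A, r (Coind.of LinearMap.id) = 1

theorem injective_iff_coindSplits (F A : Type u) [CommRing F] [Ring A] [Algebra F A]
    [Module.Injective F A] : Module.Injective A A ↔ CoindSplits F A := by
  let ι : A →ₗ[A] Coind F A A := LinearMap.toSpanSingleton A _ (Coind.of LinearMap.id)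
  have hι : Function.Injective ι := fun a b hab => by
    simpa [ι] using DFunLike.congr_fun hab 1
  constructor
  · intro _
    obtain ⟨r, hr⟩ := Module.Injective.out ι hι LinearMap.id
    exact ⟨r, by simpa [ι] using hr 1⟩
  · rintro ⟨r, hr⟩
    have := Coind.injective (F := F) (A := A) (V := A)
    refine .of_split ι r (LinearMap.ext fun a => ?_)
    simp [ι, hr]

section BaseChange

variable {k E : Type*} [CommRing k] [CommRing E] [Algebra k E]

theorem isBaseChange_baseChangeHom (M : Type*) [AddCommGroup M] [Module k M] [Module.Free k M]
    [Module.Finite k M] : IsBaseChange E (LinearMap.baseChangeHom k E M M) := by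
  have j := TensorProduct.isBaseChange k M E
  convert j.end
  ext f : 1
  exact j.algHom_ext _ _ fun m => (j.endHom_comp_apply f m).symm

variable {Λ : Type*} [Ring Λ] [Algebra k Λ]

theorem LinearMap.map_smul_of_map_one_tmul_smul {M N : Type*} [AddCommGroup M] [AddCommGroup N]
    [Module (E ⊗[k] Λ) M] [Module (E ⊗[k] Λ) N] [Module E M] [Module E N]
    [IsScalarTower E (E ⊗[k] Λ) M] [IsScalarTower E (E ⊗[k] Λ) N] (f : M →ₗ[E] N)
    (hf : ∀ (a : Λ) (m : M), f ((1 ⊗ₜ[k] a : E ⊗[k] Λ) • m) = (1 ⊗ₜ[k] a : E ⊗[k] Λ) • f m)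
    (t : E ⊗[k] Λ) (m : M) : f (t • m) = t • f m := by
  induction t using TensorProduct.induction_on with
  | zero => simp
  | tmul e a =>
    rw [show (e ⊗ₜ[k] a : E ⊗[k] Λ) = e • (1 ⊗ₜ[k] a) by rw [smul_tmul', smul_eq_mul, mul_one],
      smul_assoc, smul_assoc, map_smul, hf]
  | add s t hs ht => simp only [add_smul, map_add, hs, ht]

namespace Coind

variable (E) in
def baseChange {V : Type*} [AddCommGroup V] [Module k V] :
    Coind k Λ V →+ Coind E (E ⊗[k] Λ) (E ⊗[k] V) where
  toFun f := of ((of.symm f).baseChange E)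
  map_zero' := by simp
  map_add' f g := by simp [LinearMap.baseChange_add]

lemma baseChange_of {V : Type*} [AddCommGroup V] [Module k V] (f : Λ →ₗ[k] V) :
    baseChange E (of f) = of (f.baseChange E) := rfl

lemma baseChange_smul {V : Type*} [AddCommGroup V] [Module k V] (a : Λ) (f : Coind k Λ V) :
    baseChange E (a • f) = (1 ⊗ₜ[k] a : E ⊗[k] Λ) • baseChange E f := by
  ext x
  induction x using TensorProduct.induction_on with
  | zero => simp
  | tmul e y => simp [baseChange]
  | add x y hx hy => simp only [map_add, hx, hy]

end Coind

theorem CoindSplits.baseChange [Module.Free k Λ] [Module.Finite k Λ] (h : CoindSplits k Λ) :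
    CoindSplits E (E ⊗[k] Λ) := by
  obtain ⟨r, hr⟩ := h
  have hb := isBaseChange_baseChangeHom (k := k) (E := E) Λ
  let ρ : Coind E (E ⊗[k] Λ) (E ⊗[k] Λ) →ₗ[E] E ⊗[k] Λ :=
    hb.lift (TensorProduct.mk k E Λ 1 ∘ₗ r.restrictScalars k ∘ₗ Coind.of.toLinearMap) ∘ₗ
      Coind.of.symm.toLinearMap
  have hρ (f : Coind k Λ Λ) : ρ (Coind.baseChange E f) = 1 ⊗ₜ r f :=
    hb.lift_eq _ (Coind.of.symm f)
  have hcomm (a : Λ) (F : Coind E (E ⊗[k] Λ) (E ⊗[k] Λ)) :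
      ρ ((1 ⊗ₜ[k] a : E ⊗[k] Λ) • F) = (1 ⊗ₜ[k] a : E ⊗[k] Λ) • ρ F := by
    obtain ⟨G, rfl⟩ := Coind.of.surjective F
    induction G using hb.inductionOn with
    | zero => simp
    | tmul f =>
      rw [LinearMap.baseChangeHom_apply, ← Coind.baseChange_of, ← Coind.baseChange_smul, hρ, hρ,
        map_smul, smul_eq_mul, smul_eq_mul, Algebra.TensorProduct.tmul_mul_tmul, mul_one]
    | smul e G ih =>
      rw [map_smul Coind.of e G, smul_comm _ e, map_smul ρ e, map_smul ρ e, ih, smul_comm]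
    | add G₁ G₂ h₁ h₂ => simp only [map_add, smul_add, h₁, h₂]
  refine ⟨{ ρ with map_smul' := LinearMap.map_smul_of_map_one_tmul_smul ρ hcomm }, ?_⟩
  show ρ (Coind.of LinearMap.id) = 1
  rw [← LinearMap.baseChange_id, ← Coind.baseChange_of, hρ, hr, Algebra.TensorProduct.one_def]

theorem CoindSplits.of_baseChange (φ : E →ₗ[k] k) (hφ : φ 1 = 1)
    (h : CoindSplits E (E ⊗[k] Λ)) : CoindSplits k Λ := by
  obtain ⟨r, hr⟩ := h
  let π : E ⊗[k] Λ →ₗ[k] Λ := TensorProduct.lid k Λ ∘ₗ φ.rTensor Λ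
  have hπ (a : Λ) (t : E ⊗[k] Λ) : π ((1 ⊗ₜ a) * t) = a * π t := by
    induction t using TensorProduct.induction_on with
    | zero => simp
    | tmul e b => simp [π]
    | add s t hs ht => simp only [mul_add, map_add, hs, ht]
  let r' : Coind k Λ Λ →ₗ[Λ] Λ :=
    { toFun f := π (r (Coind.baseChange E f))
      map_add' f g := by simp only [map_add]
      map_smul' a f := by
        simp only [Coind.baseChange_smul, map_smul, smul_eq_mul, hπ, RingHom.id_apply] }
  refine ⟨r', ?_⟩
  simp [r', Coind.baseChange_of, π, hr, Algebra.TensorProduct.one_def, hφ]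

end BaseChange

/-- Let `Λ` be a finite-dimensional algebra over a field `k` and `E/k` a
field extension.  Then `Λ` is self-injective (injective as a left module over itself) if
and only if the `E`-algebra `Λ ⊗_k E` is self-injective. -/
theorem selfInjective_iff_selfInjective_tensor (k E Λ : Type) [Field k] [Field E]
    [Algebra k E] [Ring Λ] [Algebra k Λ] [FiniteDimensional k Λ] :
    Module.Injective Λ Λ ↔ Module.Injective (Λ ⊗[k] E) (Λ ⊗[k] E) := by
  have := Module.injective_of_isSemisimpleRing k Λ
  have := Module.injective_of_isSemisimpleRing E (E ⊗[k] Λ)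
  obtain ⟨φ, hφ⟩ := (Algebra.linearMap k E).exists_leftInverse_of_injective
    (LinearMap.ker_eq_bot.mpr (algebraMap k E).injective)
  rw [Module.injective_self_iff_of_ringEquiv (Algebra.TensorProduct.comm k Λ E).toRingEquiv,
    injective_iff_coindSplits k, injective_iff_coindSplits E]
  exact ⟨CoindSplits.baseChange, .of_baseChange φ (by simpa using LinearMap.congr_fun hφ 1)⟩
end

section
/- If A and B are finite-dimensional self-injective algebras over a field k, then the tensor product algebra A ⊗_k B is self-injective. -/
set_option maxHeartbeats 1000000
set_option synthInstance.maxHeartbeats 400000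

open TensorProduct

noncomputable section SelfInjAux

variable (k : Type) [Field k]

/-- Type synonym: `R →ₗ[k] V` viewed as a left `R`-module via right multiplication
on the argument. -/
def Dmod (R V : Type) [Ring R] [Algebra k R] [AddCommGroup V] [Module k V] : Type :=
  R →ₗ[k] V

namespace Dmod

variable {R V : Type} [Ring R] [Algebra k R] [AddCommGroup V] [Module k V]

variable (R V) in
instance : AddCommGroup (Dmod k R V) := inferInstanceAs (AddCommGroup (R →ₗ[k] V))

variable (R V) in
instance : Module k (Dmod k R V) := inferInstanceAs (Module k (R →ₗ[k] V))

/-- Build an element of `Dmod`. -/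
def of (f : R →ₗ[k] V) : Dmod k R V := f

/-- The underlying linear map. -/
def lin (f : Dmod k R V) : R →ₗ[k] V := f

lemma ext {f g : Dmod k R V} (h : ∀ x, lin k f x = lin k g x) : f = g :=
  LinearMap.ext h

@[simp] lemma lin_of (f : R →ₗ[k] V) : lin k (of k f) = f := rfl

@[simp] lemma lin_add (f g : Dmod k R V) (x : R) :
    lin k (f + g) x = lin k f x + lin k g x := rfl

variable (R V) in
instance : Module R (Dmod k R V) where
  smul r f := of k ((lin k f).comp (LinearMap.mulRight k r))
  one_smul f := ext k fun x => by
    show lin k f (x * 1) = lin k f x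
    rw [mul_one]
  mul_smul r s f := ext k fun x => by
    show lin k f (x * (r * s)) = lin k f (x * r * s)
    rw [mul_assoc]
  smul_zero r := ext k fun x => rfl
  smul_add r f g := ext k fun x => rfl
  add_smul r s f := ext k fun x => by
    show lin k f (x * (r + s)) = lin k f (x * r) + lin k f (x * s)
    rw [mul_add, map_add]
  zero_smul f := ext k fun x => by
    show lin k f (x * 0) = 0
    rw [mul_zero, map_zero]

@[simp] lemma lin_smul (r : R) (f : Dmod k R V) (x : R) :
    lin k (r • f) x = lin k f (x * r) := rfl

@[simp] lemma lin_ksmul (c : k) (f : Dmod k R V) (x : R) :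
    lin k (c • f) x = c • lin k f x := rfl

variable (R V) in
instance : IsScalarTower k R (Dmod k R V) :=
  ⟨fun c r f => ext k fun x => by
    show lin k f (x * (c • r)) = c • lin k f (x * r)
    rw [mul_smul_comm, map_smul]⟩

variable (R V) in
/-- `Dmod k R V` is `k`-linearly just `R →ₗ[k] V`. -/
def equiv : (R →ₗ[k] V) ≃ₗ[k] Dmod k R V where
  toFun := of k
  invFun := lin k
  map_add' _ _ := rfl
  map_smul' _ _ := rfl
  left_inv _ := rfl
  right_inv _ := rfl

@[simp] lemma equiv_apply (f : R →ₗ[k] V) : equiv k R V f = of k f := rfl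

@[simp] lemma equiv_symm_apply (f : Dmod k R V) : (equiv k R V).symm f = lin k f := rfl

variable (R V) in
/-- `Dmod k R V` is an injective `R`-module: it is (co-)induced from the
injective `k`-module `V`. -/
theorem injective : Module.Injective R (Dmod k R V) := by
  constructor
  intro X Y _ _ _ _ f hf g
  letI : Module k X := Module.compHom X (algebraMap k R)
  letI : Module k Y := Module.compHom Y (algebraMap k R)
  letI : IsScalarTower k R X :=
    ⟨fun c r x => by rw [Algebra.smul_def, mul_smul]; rfl⟩
  letI : IsScalarTower k R Y :=
    ⟨fun c r y => by rw [Algebra.smul_def, mul_smul]; rfl⟩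
  -- the `k`-linear map underlying `f`
  set fk : X →ₗ[k] Y := f.restrictScalars k with hfk
  have hfk_inj : Function.Injective fk := hf
  -- evaluation of `g` at `1`
  have hax : ∀ (c : k) (x : X), c • x = algebraMap k R c • x := fun _ _ => rfl
  set g' : X →ₗ[k] V :=
    { toFun := fun x => lin k (g x) 1
      map_add' := fun x y => by
        show lin k (g (x + y)) 1 = lin k (g x) 1 + lin k (g y) 1
        rw [map_add]; rfl
      map_smul' := fun c x => by
        show lin k (g (c • x)) 1 = c • lin k (g x) 1
        rw [hax, map_smul, lin_smul, one_mul,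
          Algebra.algebraMap_eq_smul_one, map_smul] } with hg'
  -- extend `g' ∘ fk⁻¹ : range fk → V` to all of `Y`, using that `k` is a field
  obtain ⟨G, hG⟩ := LinearMap.exists_extend
    (g'.comp (LinearEquiv.ofInjective fk hfk_inj).symm.toLinearMap)
  have hGf : ∀ x : X, G (fk x) = g' x := by
    intro x
    have : fk x = (LinearMap.range fk).subtype ((LinearEquiv.ofInjective fk hfk_inj) x) := rfl
    rw [this, ← LinearMap.comp_apply, hG, LinearMap.comp_apply,
      LinearEquiv.coe_toLinearMap, LinearEquiv.symm_apply_apply]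
  let inner : Y → Dmod k R V := fun y => of k
    { toFun := fun x => G (x • y),
      map_add' := fun x₁ x₂ => by
        show G ((x₁ + x₂) • y) = G (x₁ • y) + G (x₂ • y)
        rw [add_smul, map_add],
      map_smul' := fun c x => by
        show G ((c • x) • y) = c • G (x • y)
        rw [smul_assoc, map_smul] }
  let dmap : Y →ₗ[R] Dmod k R V :=
    { toFun := inner,
      map_add' := fun y₁ y₂ => ext k fun x => by
        show G (x • (y₁ + y₂)) = G (x • y₁) + G (x • y₂)
        rw [smul_add, map_add],
      map_smul' := fun r y => ext k fun x => by
        show G (x • r • y) = G ((x * r) • y)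
        rw [mul_smul] }
  refine ⟨dmap, ?_⟩
  intro x
  refine ext k fun r => ?_
  show G (r • f x) = lin k (g x) r
  have h1 : r • f x = fk (r • x) := (f.map_smul r x).symm
  rw [h1, hGf, hg']
  show lin k (g (r • x)) 1 = lin k (g x) r
  rw [map_smul, lin_smul, one_mul]

end Dmod

/-- A retract of an injective module is injective. -/
theorem Module.Injective.of_retract {R Q P : Type} [Ring R] [AddCommGroup Q] [Module R Q]
    [AddCommGroup P] [Module R P] (i : Q →ₗ[R] P) (p : P →ₗ[R] Q) (hpi : ∀ q, p (i q) = q)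
    (hP : Module.Injective R P) : Module.Injective R Q := by
  constructor
  intro X Y _ _ _ _ f hf g
  obtain ⟨h, hh⟩ := hP.out f hf (i.comp g)
  refine ⟨p.comp h, fun x => ?_⟩
  rw [LinearMap.comp_apply, hh, LinearMap.comp_apply, hpi]

/-- A finite-dimensional self-injective algebra is a retract of a coinduced module. -/
theorem exists_retract (R : Type) [Ring R] [Algebra k R] [FiniteDimensional k R]
    (hR : Module.Injective R R) :
    ∃ (ι : R →ₗ[R] Dmod k R (Fin (Module.finrank k R) → k))
      (π : Dmod k R (Fin (Module.finrank k R) → k) →ₗ[R] R), ∀ r, π (ι r) = r := by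
  classical
  set b := Module.finBasis k R
  set ι : R →ₗ[R] Dmod k R (Fin (Module.finrank k R) → k) :=
    { toFun := fun r => Dmod.of k (b.equivFun.toLinearMap.comp (LinearMap.mulRight k r))
      map_add' := fun r s => Dmod.ext k fun x => by
        show b.equivFun (x * (r + s)) = b.equivFun (x * r) + b.equivFun (x * s)
        rw [mul_add, map_add]
      map_smul' := fun s r => Dmod.ext k fun x => by
        show b.equivFun (x * (s • r)) = b.equivFun ((x * s) * r)
        rw [smul_eq_mul, mul_assoc] } with hι
  have hinj : Function.Injective ι := by
    intro r s h
    have := congrArg (fun f => Dmod.lin k f 1) h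
    simp only [hι] at this
    have h2 : b.equivFun (1 * r) = b.equivFun (1 * s) := this
    rw [one_mul, one_mul] at h2
    exact b.equivFun.injective h2
  obtain ⟨π, hπ⟩ := hR.out ι hinj LinearMap.id
  exact ⟨ι, π, fun r => hπ r⟩

end SelfInjAux

/-- If `A` and `B` are finite-dimensional self-injective algebras over a
field `k`, then the tensor product algebra `A ⊗_k B` is self-injective. -/
theorem tensor_selfInjective (k A B : Type) [Field k] [Ring A] [Algebra k A] [Ring B]
    [Algebra k B] [FiniteDimensional k A] [FiniteDimensional k B]
    (hA : Module.Injective A A) (hB : Module.Injective B B) :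
    Module.Injective (A ⊗[k] B) (A ⊗[k] B) := by
  classical
  obtain ⟨ιA, πA, hA'⟩ := exists_retract k A hA
  obtain ⟨ιB, πB, hB'⟩ := exists_retract k B hB
  set V : Type := Fin (Module.finrank k A) → k
  set W : Type := Fin (Module.finrank k B) → k
  -- the `k`-linear equivalence between the tensor of duals and the dual of the tensor
  set e : (Dmod k A V ⊗[k] Dmod k B W) ≃ₗ[k] Dmod k (A ⊗[k] B) (V ⊗[k] W) :=
    (TensorProduct.congr (Dmod.equiv k A V).symm (Dmod.equiv k B W).symm) ≪≫ₗ
      (homTensorHomEquiv k A B V W) ≪≫ₗ (Dmod.equiv k (A ⊗[k] B) (V ⊗[k] W)) with he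
  have he_tmul : ∀ (f : Dmod k A V) (g : Dmod k B W) (x : A) (y : B),
      Dmod.lin k (e (f ⊗ₜ g)) (x ⊗ₜ y) = (Dmod.lin k f x) ⊗ₜ (Dmod.lin k g y) := by
    intro f g x y
    simp only [he, LinearEquiv.trans_apply, TensorProduct.congr_tmul,
      Dmod.equiv_symm_apply, homTensorHomEquiv_apply, TensorProduct.homTensorHomMap_apply,
      Dmod.equiv_apply, Dmod.lin_of, TensorProduct.map_tmul]
  set ι₀ : (A ⊗[k] B) →ₗ[k] Dmod k (A ⊗[k] B) (V ⊗[k] W) :=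
    e.toLinearMap.comp (TensorProduct.map (ιA.restrictScalars k) (ιB.restrictScalars k)) with hι₀
  set π₀ : Dmod k (A ⊗[k] B) (V ⊗[k] W) →ₗ[k] (A ⊗[k] B) :=
    (TensorProduct.map (πA.restrictScalars k) (πB.restrictScalars k)).comp
      e.symm.toLinearMap with hπ₀
  have hretract : ∀ z, π₀ (ι₀ z) = z := by
    intro z
    rw [hι₀, hπ₀, LinearMap.comp_apply, LinearMap.comp_apply, LinearEquiv.coe_toLinearMap,
      LinearEquiv.coe_toLinearMap, LinearEquiv.symm_apply_apply, ← LinearMap.comp_apply,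
      ← TensorProduct.map_comp]
    have h1 : (πA.restrictScalars k).comp (ιA.restrictScalars k) = LinearMap.id :=
      LinearMap.ext fun a => hA' a
    have h2 : (πB.restrictScalars k).comp (ιB.restrictScalars k) = LinearMap.id :=
      LinearMap.ext fun b => hB' b
    rw [h1, h2, TensorProduct.map_id, LinearMap.id_apply]
  -- `ι₀` is `A ⊗ B`-linear
  have hι_smul : ∀ (c z : A ⊗[k] B), ι₀ (c • z) = c • ι₀ z := by
    intro c z
    induction z using TensorProduct.induction_on with
    | zero => rw [smul_zero, map_zero, smul_zero]
    | add z₁ z₂ h₁ h₂ => rw [smul_add, map_add, map_add, h₁, h₂, smul_add]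
    | tmul a b =>
      induction c using TensorProduct.induction_on with
      | zero => rw [zero_smul, map_zero, zero_smul]
      | add c₁ c₂ h₁ h₂ => rw [add_smul, map_add, h₁, h₂, add_smul]
      | tmul s t =>
        refine Dmod.ext k fun z => ?_
        induction z using TensorProduct.induction_on with
        | zero => rw [map_zero, map_zero]
        | add z₁ z₂ h₁ h₂ => rw [map_add, map_add, h₁, h₂]
        | tmul x y =>
          have lhs : (s ⊗ₜ[k] t) • (a ⊗ₜ[k] b) = (s * a) ⊗ₜ[k] (t * b) := by
            rw [smul_eq_mul, Algebra.TensorProduct.tmul_mul_tmul]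
          rw [lhs]
          have e1 : ι₀ ((s * a) ⊗ₜ[k] (t * b)) = e ((ιA (s * a)) ⊗ₜ (ιB (t * b))) := rfl
          have e2 : ι₀ (a ⊗ₜ[k] b) = e ((ιA a) ⊗ₜ (ιB b)) := rfl
          rw [e1, Dmod.lin_smul, he_tmul]
          have e3 : (x ⊗ₜ[k] y) * (s ⊗ₜ[k] t) = (x * s) ⊗ₜ[k] (y * t) := by
            rw [Algebra.TensorProduct.tmul_mul_tmul]
          rw [e2, e3, he_tmul]
          have e4 : ιA (s * a) = s • ιA a := by rw [← smul_eq_mul, map_smul]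
          have e5 : ιB (t * b) = t • ιB b := by rw [← smul_eq_mul, map_smul]
          rw [e4, e5, Dmod.lin_smul, Dmod.lin_smul]
  -- `π₀` is `A ⊗ B`-linear
  have hπ_smul : ∀ (c : A ⊗[k] B) (F : Dmod k (A ⊗[k] B) (V ⊗[k] W)),
      π₀ (c • F) = c • π₀ F := by
    intro c F
    obtain ⟨G, rfl⟩ := e.surjective F
    induction G using TensorProduct.induction_on with
    | zero => rw [map_zero, smul_zero, map_zero, smul_zero]
    | add G₁ G₂ h₁ h₂ => rw [map_add, smul_add, map_add, map_add, h₁, h₂, smul_add]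
    | tmul f g =>
      induction c using TensorProduct.induction_on with
      | zero => rw [zero_smul, map_zero, zero_smul]
      | add c₁ c₂ h₁ h₂ => rw [add_smul, map_add, h₁, h₂, add_smul]
      | tmul s t =>
        have key : (s ⊗ₜ[k] t) • (e (f ⊗ₜ g)) = e ((s • f) ⊗ₜ (t • g)) := by
          refine Dmod.ext k fun z => ?_
          induction z using TensorProduct.induction_on with
          | zero => rw [map_zero, map_zero]
          | add z₁ z₂ h₁ h₂ => rw [map_add, map_add, h₁, h₂]
          | tmul x y =>
            rw [Dmod.lin_smul, Algebra.TensorProduct.tmul_mul_tmul, he_tmul, he_tmul,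
              Dmod.lin_smul, Dmod.lin_smul]
        have peg : ∀ (f' : Dmod k A V) (g' : Dmod k B W),
            π₀ (e (f' ⊗ₜ g')) = (πA f') ⊗ₜ[k] (πB g') := by
          intro f' g'
          rw [hπ₀, LinearMap.comp_apply, LinearEquiv.coe_toLinearMap,
            LinearEquiv.symm_apply_apply, TensorProduct.map_tmul]
          rfl
        rw [key, peg, peg]
        have e4 : πA (s • f) = s * πA f := by rw [map_smul, smul_eq_mul]
        have e5 : πB (t • g) = t * πB g := by rw [map_smul, smul_eq_mul]
        rw [e4, e5, smul_eq_mul, Algebra.TensorProduct.tmul_mul_tmul]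
  set ι : (A ⊗[k] B) →ₗ[A ⊗[k] B] Dmod k (A ⊗[k] B) (V ⊗[k] W) :=
    { toFun := ι₀
      map_add' := fun x y => map_add ι₀ x y
      map_smul' := fun c z => hι_smul c z }
  set π : Dmod k (A ⊗[k] B) (V ⊗[k] W) →ₗ[A ⊗[k] B] (A ⊗[k] B) :=
    { toFun := π₀
      map_add' := fun x y => map_add π₀ x y
      map_smul' := fun c F => hπ_smul c F }
  exact Module.Injective.of_retract ι π hretract (Dmod.injective k (A ⊗[k] B) (V ⊗[k] W))
end
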